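/- arXiv:0907.0156 — 5 statements merged into one kernel-verified Lean document; each statement's English description precedes it below -/
import Mathlib

section
/- The Cauchy–Vandermonde determinant identity: let f_i(x) = x^{i-1} for i = 1,…,n and f_{n+i}(x) = 1/(z_i - x) for i = 1,…,m. Then det(f_i(x_j))_{i,j=1}^{n+m} = (∏_{1≤i<j≤m} (z_i - z_j) · ∏_{1≤i<j≤n+m} (x_j - x_i)) / ∏_{i=1}^{m} ∏_{j=1}^{n+m} (z_i - x_j). -/
open Finset

open Polynomial


open Fin.NatCast in
private lemma cv_finRotate_pow_apply (N k : ℕ) (v : Fin (N + 1)) :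
    ((finRotate (N + 1)) ^ k) v = v + (k : Fin (N + 1)) := by
  induction k with
  | zero => simp
  | succ k ih =>
    rw [pow_succ', Equiv.Perm.mul_apply, ih, finRotate_succ_apply, Nat.cast_add, Nat.cast_one,
      add_assoc]

open Fin.NatCast in
private lemma cv_sign_shift {n m : ℕ} (hpos : 0 < n + m) (τ : Equiv.Perm (Fin (n + m)))
    (hτ : ∀ v : Fin (n + m), ((τ v : Fin (n + m)) : ℕ) =
      if (v : ℕ) < m then (v : ℕ) + n else (v : ℕ) - m) :
    Equiv.Perm.sign τ = (-1) ^ (n * m) := by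
  obtain ⟨N, hN⟩ : ∃ N, n + m = N + 1 := ⟨n + m - 1, by omega⟩
  rcases Nat.eq_zero_or_pos m with hm | hm
  · have hτ1 : τ = 1 := by
      ext v
      have h := hτ v
      simp only [hm, Nat.not_lt_zero, if_neg, Nat.sub_zero] at h
      simpa using h
    simp [hτ1, hm]
  · set e : Fin (n + m) ≃ Fin (N + 1) := finCongr hN with he
    have hsign : Equiv.Perm.sign ((e.symm.trans (τ : Equiv.Perm (Fin (n+m)))).trans e)
        = Equiv.Perm.sign τ := Equiv.Perm.sign_symm_trans_trans τ e
    have hτ' : (e.symm.trans (τ : Equiv.Perm (Fin (n+m)))).trans e = (finRotate (N + 1)) ^ n := by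
      ext v
      rw [cv_finRotate_pow_apply, Fin.add_def, Fin.val_natCast]
      have hL : ((((e.symm.trans (τ : Equiv.Perm (Fin (n+m)))).trans e) v : Fin (N+1)) : ℕ) =
          if (v : ℕ) < m then (v : ℕ) + n else (v : ℕ) - m := by
        simp only [Equiv.trans_apply, he, finCongr_apply, Fin.coe_cast]
        exact hτ _
      rw [hL]
      have hvlt : (v : ℕ) < N + 1 := v.isLt
      have hnm : n % (N + 1) = n := Nat.mod_eq_of_lt (by omega)
      rw [hnm]
      split_ifs with h
      · exact (Nat.mod_eq_of_lt (by omega)).symm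
      · have hmod : ((v : ℕ) + n) % (N + 1) = (v : ℕ) - m := by
          rw [Nat.mod_eq_sub_mod (by omega), Nat.mod_eq_of_lt (by omega)]
          omega
        exact hmod.symm
    rw [← hsign, hτ', map_pow, sign_finRotate, Nat.add_sub_cancel, ← pow_mul]
    have hpar : Even (N * n) ↔ Even (n * m) := by
      rw [Nat.even_mul, Nat.even_mul]
      have h2 : Even (N + 1) ↔ (Even n ↔ Even m) := by rw [← hN, Nat.even_add]
      rw [Nat.even_add_one] at h2
      tauto
    rcases Nat.even_or_odd (N * n) with h | h
    · rw [h.neg_one_pow, (hpar.mp h).neg_one_pow]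
    · rw [h.neg_one_pow, (Nat.not_even_iff_odd.mp (fun he' => (Nat.not_even_iff_odd.mpr h)
        (hpar.mpr he'))).neg_one_pow]
/-- The Cauchy–Vandermonde determinant identity: with `f_i(x) = x^{i-1}` for
`i ≤ n` and `f_{n+i}(x) = 1/(z_i - x)`, the determinant `det (f_i(x_j))` equals
`(∏_{i<j} (z_i - z_j) · ∏_{i<j} (x_j - x_i)) / ∏_{i,j} (z_i - x_j)`. -/
theorem cauchy_vandermonde_det {K : Type*} [Field K] (n m : ℕ)
    (z : Fin m → K) (x : Fin (n + m) → K)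
    (hzx : ∀ i j, z i ≠ x j) :
    (Matrix.of fun i j : Fin (n + m) =>
        if h : (i : ℕ) < n then x j ^ (i : ℕ)
        else (z ⟨(i : ℕ) - n, by have := i.isLt; omega⟩ - x j)⁻¹).det =
      ((∏ i : Fin m, ∏ j ∈ Finset.Ioi i, (z i - z j)) *
        ∏ i : Fin (n + m), ∏ j ∈ Finset.Ioi i, (x j - x i)) /
        ∏ i : Fin m, ∏ j : Fin (n + m), (z i - x j) := by
  by_cases hz : Function.Injective z
  case neg =>
    rw [Function.not_injective_iff] at hz
    obtain ⟨a, b, hab, hne⟩ := hz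
    have hrow : ∀ (c : Fin m) (j : Fin (n + m)),
        (Matrix.of fun i j : Fin (n + m) =>
          if h : (i : ℕ) < n then x j ^ (i : ℕ)
          else (z ⟨(i : ℕ) - n, by have := i.isLt; omega⟩ - x j)⁻¹)
          (⟨n + (c : ℕ), by omega⟩ : Fin (n + m)) j = (z c - x j)⁻¹ := by
      intro c j
      rw [Matrix.of_apply, dif_neg (by show ¬ n + (c : ℕ) < n; omega)]
      have hc : (⟨n + (c : ℕ) - n, by omega⟩ : Fin m) = c :=
        Fin.ext (by show n + (c : ℕ) - n = (c : ℕ); omega)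
      rw [hc]
    have hne' : (⟨n + (a : ℕ), by omega⟩ : Fin (n + m)) ≠ ⟨n + (b : ℕ), by omega⟩ := by
      intro h
      rw [Fin.mk.injEq] at h
      exact hne (Fin.ext (by omega))
    have hroweq : (Matrix.of fun i j : Fin (n + m) =>
          if h : (i : ℕ) < n then x j ^ (i : ℕ)
          else (z ⟨(i : ℕ) - n, by have := i.isLt; omega⟩ - x j)⁻¹)
          (⟨n + (a : ℕ), by omega⟩ : Fin (n + m)) =
        (Matrix.of fun i j : Fin (n + m) =>
          if h : (i : ℕ) < n then x j ^ (i : ℕ)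
          else (z ⟨(i : ℕ) - n, by have := i.isLt; omega⟩ - x j)⁻¹)
          (⟨n + (b : ℕ), by omega⟩ : Fin (n + m)) := by
      funext j
      rw [hrow a j, hrow b j, hab]
    rw [Matrix.det_zero_of_row_eq hne' hroweq]
    have h1 : (∏ i : Fin m, ∏ j ∈ Finset.Ioi i, (z i - z j)) = 0 := by
      rcases lt_or_gt_of_ne hne with h | h
      · exact prod_eq_zero (mem_univ a) (prod_eq_zero (mem_Ioi.mpr h) (by rw [hab, sub_self]))
      · exact prod_eq_zero (mem_univ b) (prod_eq_zero (mem_Ioi.mpr h) (by rw [← hab, sub_self]))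
    rw [h1, zero_mul, zero_div]
  case pos =>
    rcases Nat.eq_zero_or_pos (n + m) with h0 | hpos
    · obtain ⟨hn0, hm0⟩ : n = 0 ∧ m = 0 := by omega
      subst hn0; subst hm0
      simp
    set A : Matrix (Fin (n + m)) (Fin (n + m)) K := Matrix.of fun i j : Fin (n + m) =>
        if h : (i : ℕ) < n then x j ^ (i : ℕ)
        else (z ⟨(i : ℕ) - n, by have := i.isLt; omega⟩ - x j)⁻¹ with hA
    set Zp := ∏ i : Fin m, ∏ j ∈ Finset.Ioi i, (z i - z j) with hZp
    set Xp := ∏ i : Fin (n + m), ∏ j ∈ Finset.Ioi i, (x j - x i) with hXp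
    set Dp := ∏ i : Fin m, ∏ j : Fin (n + m), (z i - x j) with hDp
    have hDp0 : Dp ≠ 0 := prod_ne_zero_iff.mpr fun i _ =>
      prod_ne_zero_iff.mpr fun j _ => sub_ne_zero.mpr (hzx i j)
    rw [eq_div_iff hDp0]
    -- polynomial setup
    set Q : K[X] := ∏ k : Fin m, (C (z k) - X) with hQ
    set Pc : Fin m → K[X] := fun i => ∏ k ∈ univ.erase i, (C (z k) - X) with hPc
    have hdeg1 : ∀ a : K, (C a - X).natDegree = 1 := fun a => by
      rw [← natDegree_neg, neg_sub, natDegree_X_sub_C]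
    have hQd : Q.natDegree ≤ m := by
      refine le_trans (natDegree_prod_le _ _) ?_
      simp [hdeg1]
    have hRmon : (∏ k : Fin m, (X - C (z k))).Monic :=
      monic_prod_of_monic _ _ fun k _ => monic_X_sub_C _
    have hRd : (∏ k : Fin m, (X - C (z k))).natDegree = m := by
      rw [natDegree_prod_of_monic _ _ fun k _ => monic_X_sub_C _]
      simp [natDegree_X_sub_C]
    have hQR : Q = C ((-1 : K) ^ m) * ∏ k : Fin m, (X - C (z k)) := by
      rw [map_pow, map_neg, map_one, hQ]
      calc ∏ k : Fin m, (C (z k) - X) = ∏ k : Fin m, ((-1) * (X - C (z k))) := by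
            refine Finset.prod_congr rfl fun k _ => by ring
        _ = (-1 : K[X]) ^ m * ∏ k : Fin m, (X - C (z k)) := by
            rw [Finset.prod_mul_distrib, Finset.prod_const, card_univ, Fintype.card_fin]
    have hQm : Q.coeff m = (-1 : K) ^ m := by
      have hc1 : (∏ k : Fin m, (X - C (z k))).coeff m = 1 := by
        have := hRmon.coeff_natDegree
        rwa [hRd] at this
      rw [hQR, coeff_C_mul, hc1, mul_one]
    have hQeval : ∀ t : K, Q.eval t = ∏ k : Fin m, (z k - t) := fun t => by
      rw [hQ, eval_prod]; simp
    have hPceval : ∀ (i : Fin m) (t : K),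
        (Pc i).eval t = ∏ k ∈ univ.erase i, (z k - t) := fun i t => by
      simp only [hPc]; rw [eval_prod]; simp
    have hPcd : ∀ i : Fin m, (Pc i).natDegree < m := fun i => by
      have h1 : (Pc i).natDegree ≤ (univ.erase i).card := by
        refine le_trans (natDegree_prod_le _ _) ?_
        simp [hdeg1]
      have h2 : (univ.erase i).card = m - 1 := by
        rw [card_erase_of_mem (mem_univ i), card_univ, Fintype.card_fin]
      have hm0 : 0 < m := i.pos
      omega
    set P : Fin (n + m) → K[X] := fun i =>
      if h : (i : ℕ) < n then X ^ (i : ℕ) * Q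
      else Pc ⟨(i : ℕ) - n, by have := i.isLt; omega⟩ with hP
    have hPd : ∀ i, (P i).natDegree < n + m := fun i => by
      simp only [hP]
      split_ifs with h
      · refine lt_of_le_of_lt natDegree_mul_le ?_
        rw [natDegree_X_pow]
        omega
      · exact lt_of_lt_of_le (hPcd _) (by omega)
    set d : Fin (n + m) → K := fun j => ∏ i : Fin m, (z i - x j) with hd
    have hPeval : ∀ i j, (P i).eval (x j) = A i j * d j := fun i j => by
      simp only [hP, hA, Matrix.of_apply, hd]
      split_ifs with h
      · rw [eval_mul, eval_pow, eval_X, hQeval]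
      · have hz0 : z ⟨(i : ℕ) - n, by have := i.isLt; omega⟩ - x j ≠ 0 :=
          sub_ne_zero.mpr (hzx _ _)
        rw [hPceval, eq_inv_mul_iff_mul_eq₀ hz0]
        exact Finset.mul_prod_erase univ (fun k => z k - x j) (mem_univ _)
    set Cm : Matrix (Fin (n + m)) (Fin (n + m)) K :=
      Matrix.of (fun i k : Fin (n + m) => (P i).coeff k) with hCm
    have hkey : A * Matrix.diagonal d = Cm * (Matrix.vandermonde x).transpose := by
      ext i j
      rw [Matrix.mul_diagonal, Matrix.mul_apply]
      simp only [hCm, Matrix.of_apply, Matrix.transpose_apply, Matrix.vandermonde_apply]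
      rw [← hPeval i j, eval_eq_sum_range' (hPd i), ← Fin.sum_univ_eq_sum_range]
    have hdet1 : A.det * Dp = Cm.det * Xp := by
      have h := congrArg Matrix.det hkey
      rw [Matrix.det_mul, Matrix.det_mul, Matrix.det_diagonal, Matrix.det_transpose,
        Matrix.det_vandermonde] at h
      have hDd : ∏ j, d j = Dp := by
        simp only [hd, hDp]
        exact (Finset.prod_comm)
      rw [← hDd]
      exact h
    -- block decomposition of Cm
    set B : Matrix (Fin m) (Fin m) K := Matrix.of (fun i k : Fin m => (Pc i).coeff k) with hB
    set T : Matrix (Fin n) (Fin n) K :=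
      Matrix.of (fun i k : Fin n => (X ^ (i : ℕ) * Q).coeff (m + k)) with hT
    set er : Fin m ⊕ Fin n ≃ Fin (n + m) :=
      (Equiv.sumComm (Fin m) (Fin n)).trans finSumFinEquiv with her
    set ec : Fin m ⊕ Fin n ≃ Fin (n + m) :=
      finSumFinEquiv.trans (finCongr (Nat.add_comm m n)) with hec
    have herl : ∀ i : Fin m, ((er (Sum.inl i) : Fin (n + m)) : ℕ) = n + i := fun i => by
      simp [her]
    have herr : ∀ j : Fin n, ((er (Sum.inr j) : Fin (n + m)) : ℕ) = j := fun j => by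
      simp [her]
    have hecl : ∀ i : Fin m, ((ec (Sum.inl i) : Fin (n + m)) : ℕ) = i := fun i => by
      simp [hec]
    have hecr : ∀ k : Fin n, ((ec (Sum.inr k) : Fin (n + m)) : ℕ) = m + k := fun k => by
      simp [hec]
      omega
    have hPinl : ∀ i : Fin m, P (er (Sum.inl i)) = Pc i := fun i => by
      simp only [hP]
      rw [dif_neg (by rw [herl]; omega)]
      refine congrArg Pc (Fin.ext ?_)
      show ((er (Sum.inl i) : Fin (n + m)) : ℕ) - n = (i : ℕ)
      rw [herl]
      omega
    have hPinr : ∀ j : Fin n, P (er (Sum.inr j)) = X ^ (j : ℕ) * Q := fun j => by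
      simp only [hP]
      rw [dif_pos (by rw [herr]; exact j.isLt), herr]
    have hblock : Cm.submatrix er ec =
        Matrix.fromBlocks B 0
          (Matrix.of fun (j : Fin n) (i : Fin m) => (X ^ (j : ℕ) * Q).coeff i) T := by
      ext (i | i) (k | k) <;>
        simp only [Matrix.submatrix_apply, Matrix.fromBlocks_apply₁₁, Matrix.fromBlocks_apply₁₂,
          Matrix.fromBlocks_apply₂₁, Matrix.fromBlocks_apply₂₂, hCm, hB, hT, Matrix.of_apply,
          Matrix.zero_apply]
      · rw [hPinl, hecl]
      · rw [hPinl, hecr]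
        exact coeff_eq_zero_of_natDegree_lt (lt_of_lt_of_le (hPcd i) (by omega))
      · rw [hPinr, hecl]
      · rw [hPinr, hecr]
    have hT_tri : T.BlockTriangular OrderDual.toDual := by
      intro i j hij
      have hij' : (i : ℕ) < (j : ℕ) := hij
      simp only [hT, Matrix.of_apply]
      rw [coeff_X_pow_mul', if_pos (by omega)]
      exact coeff_eq_zero_of_natDegree_lt (lt_of_le_of_lt hQd (by omega))
    have hTdet : T.det = ((-1 : K) ^ m) ^ n := by
      rw [Matrix.det_of_lowerTriangular T hT_tri]
      have hdiag : ∀ i : Fin n, T i i = (-1 : K) ^ m := fun i => by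
        simp only [hT, Matrix.of_apply]
        rw [coeff_X_pow_mul, hQm]
      simp only [hdiag]
      rw [Finset.prod_const, card_univ, Fintype.card_fin]
    set τ : Equiv.Perm (Fin (n + m)) := ec.symm.trans er with hτdef
    have hsub2 : Cm.submatrix er ec = (Cm.submatrix τ id).submatrix ec ec := by
      ext a b
      simp [hτdef, Matrix.submatrix_apply]
    have hτval : ∀ v : Fin (n + m),
        ((τ v : Fin (n + m)) : ℕ) = if (v : ℕ) < m then (v : ℕ) + n else (v : ℕ) - m := by
      intro v
      by_cases h : (v : ℕ) < m
      · have hsv : ec.symm v = Sum.inl ⟨(v : ℕ), h⟩ := by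
          rw [Equiv.symm_apply_eq]
          apply Fin.ext
          rw [hecl]
        simp only [hτdef, Equiv.trans_apply]
        rw [hsv, herl, if_pos h]
        exact Nat.add_comm _ _
      · have hsv : ec.symm v = Sum.inr ⟨(v : ℕ) - m, by have := v.isLt; omega⟩ := by
          rw [Equiv.symm_apply_eq]
          apply Fin.ext
          rw [hecr]
          show (v : ℕ) = m + ((v : ℕ) - m)
          omega
        simp only [hτdef, Equiv.trans_apply]
        rw [hsv, herr, if_neg h]
    have hsign : Equiv.Perm.sign τ = (-1) ^ (n * m) := cv_sign_shift hpos τ hτval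
    have hCmdet : Cm.det = B.det := by
      have h1 : (Cm.submatrix er ec).det = B.det * ((-1 : K) ^ m) ^ n := by
        rw [hblock, Matrix.det_fromBlocks_zero₁₂, hTdet]
      have h2 : (Cm.submatrix er ec).det = (-1 : K) ^ (n * m) * Cm.det := by
        rw [hsub2, Matrix.det_submatrix_equiv_self, Matrix.det_permute, hsign]
        push_cast
        ring
      have hu0 : ((-1 : K) ^ (n * m)) ≠ 0 := pow_ne_zero _ (by norm_num)
      have hf : ((-1 : K) ^ m) ^ n = (-1 : K) ^ (n * m) := by
        rw [← pow_mul, Nat.mul_comm]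
      apply mul_left_cancel₀ hu0
      rw [← h2, h1, hf]
      ring
    have hBV : B * (Matrix.vandermonde z).transpose =
        Matrix.diagonal (fun i : Fin m => ∏ k ∈ univ.erase i, (z k - z i)) := by
      ext i l
      rw [Matrix.mul_apply]
      simp only [hB, Matrix.of_apply, Matrix.transpose_apply, Matrix.vandermonde_apply]
      have hs : ∑ k : Fin m, (Pc i).coeff (k : ℕ) * z l ^ (k : ℕ) = (Pc i).eval (z l) := by
        rw [eval_eq_sum_range' (hPcd i), ← Fin.sum_univ_eq_sum_range]
      rw [hs, hPceval]
      by_cases hil : l = i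
      · subst hil
        rw [Matrix.diagonal_apply_eq]
      · rw [Matrix.diagonal_apply_ne' _ hil]
        exact prod_eq_zero (mem_erase.mpr ⟨hil, mem_univ l⟩) (sub_self _)
    have hVz0 : (Matrix.vandermonde z).det ≠ 0 := Matrix.det_vandermonde_ne_zero_iff.mpr hz
    have hBdet : B.det = Zp := by
      have h := congrArg Matrix.det hBV
      rw [Matrix.det_mul, Matrix.det_transpose, Matrix.det_diagonal] at h
      have herase : ∀ i : Fin m, univ.erase i = Iio i ∪ Ioi i := fun i => by
        ext a
        simp only [mem_erase, mem_union, mem_Iio, mem_Ioi, mem_univ, and_true]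
        constructor
        · intro h
          exact lt_or_gt_of_ne h
        · intro h
          rcases h with h | h
          · exact ne_of_lt h
          · exact ne_of_gt h
      have hdisj : ∀ i : Fin m, Disjoint (Iio i) (Ioi i) := fun i => by
        rw [Finset.disjoint_left]
        intro a ha ha'
        exact absurd (mem_Iio.mp ha) (not_lt.mpr (le_of_lt (mem_Ioi.mp ha')))
      have hsplit : (∏ i : Fin m, ∏ k ∈ univ.erase i, (z k - z i))
          = Zp * (Matrix.vandermonde z).det := by
        calc ∏ i : Fin m, ∏ k ∈ univ.erase i, (z k - z i)
            = ∏ i : Fin m, ((∏ k ∈ Iio i, (z k - z i)) * ∏ k ∈ Ioi i, (z k - z i)) := by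
              refine Finset.prod_congr rfl fun i _ => ?_
              rw [herase i, Finset.prod_union (hdisj i)]
          _ = (∏ i : Fin m, ∏ k ∈ Iio i, (z k - z i))
              * ∏ i : Fin m, ∏ k ∈ Ioi i, (z k - z i) := Finset.prod_mul_distrib
          _ = Zp * (Matrix.vandermonde z).det := by
              rw [Matrix.det_vandermonde, hZp]
              congr 1
              exact Finset.prod_comm' fun a b => by
                simp [mem_Iio, mem_Ioi]
      apply mul_right_cancel₀ hVz0
      rw [h, hsplit]
    rw [hdet1, hCmdet, hBdet]
end

section
/- Heine's identity for determinants of moment matrices: for a weight function w on ℝ with all moments finite, the determinant of the Hankel matrix (μ_{i+j})_{i,j=0}^{n-1}, where μ_k = ∫ x^k w(x) dx, equals (1/n!) ∫…∫ ∏_{1≤i<j≤n} (x_j - x_i)² ∏_{j=1}^n w(x_j) dx_1 … dx_n. -/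
open MeasureTheory Finset

/-- Heine's identity: the determinant of the Hankel matrix of moments
`μ_k = ∫ x^k w(x) dx` equals
`(1/n!) ∫…∫ ∏_{i<j} (x_j - x_i)² ∏_j w(x_j) dx`. -/
theorem heine_identity (n : ℕ) (w : ℝ → ℝ)
    (hw : ∀ k ≤ 2 * n - 2, Integrable (fun x : ℝ => x ^ k * w x)) :
    (Matrix.of fun i j : Fin n => ∫ x : ℝ, x ^ ((i : ℕ) + (j : ℕ)) * w x).det =
      (1 / (n.factorial : ℝ)) *
        ∫ x : Fin n → ℝ,
          (∏ i : Fin n, ∏ j ∈ Finset.Ioi i, (x j - x i) ^ 2) * ∏ j : Fin n, w (x j) := by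
  classical
  set μ : ℕ → ℝ := fun k => ∫ x : ℝ, x ^ k * w x with hμ
  have hle : ∀ i j : Fin n, (i : ℕ) + (j : ℕ) ≤ 2 * n - 2 := by
    intro i j
    have hi := i.isLt
    have hj := j.isLt
    omega
  -- Integrability and Fubini for products of one-variable moments
  have intA : ∀ e : Fin n → ℕ, (∀ i, e i ≤ 2 * n - 2) →
      Integrable (fun x : Fin n → ℝ => ∏ i, x i ^ e i * w (x i)) := by
    intro e he
    exact Integrable.fintype_prod (f := fun i (t : ℝ) => t ^ e i * w t)
      (fun i => hw _ (he i))
  have intEq : ∀ e : Fin n → ℕ,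
      (∫ x : Fin n → ℝ, ∏ i, x i ^ e i * w (x i)) = ∏ i, μ (e i) :=
    fun e => integral_fintype_prod_eq_prod (ι := Fin n) (fun i (t : ℝ) => t ^ e i * w t)
  -- Pointwise expansion of the integrand
  have point : ∀ x : Fin n → ℝ,
      (∏ i : Fin n, ∏ j ∈ Finset.Ioi i, (x j - x i) ^ 2) * ∏ j : Fin n, w (x j)
        = ∑ σ : Equiv.Perm (Fin n), ∑ τ : Equiv.Perm (Fin n),
            (((Equiv.Perm.sign σ : ℤ) : ℝ) * ((Equiv.Perm.sign τ : ℤ) : ℝ)) *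
              ∏ i, x i ^ (((σ⁻¹ i : Fin n) : ℕ) + ((τ⁻¹ i : Fin n) : ℕ)) * w (x i) := by
    intro x
    have h2 : (∏ i : Fin n, ∏ j ∈ Finset.Ioi i, (x j - x i) ^ 2)
        = (Matrix.vandermonde x).det * (Matrix.vandermonde x).det := by
      rw [Matrix.det_vandermonde]
      simp only [pow_two, Finset.prod_mul_distrib]
    rw [h2, Matrix.det_apply', Finset.sum_mul_sum, Finset.sum_mul]
    refine Finset.sum_congr rfl fun σ _ => ?_
    rw [Finset.sum_mul]
    refine Finset.sum_congr rfl fun τ _ => ?_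
    simp only [Matrix.vandermonde_apply]
    have hσ : (∏ i, x (σ i) ^ (i : ℕ)) = ∏ i, x i ^ ((σ⁻¹ i : Fin n) : ℕ) := by
      rw [← Equiv.prod_comp σ (fun j => x j ^ ((σ⁻¹ j : Fin n) : ℕ))]
      simp
    have hτ : (∏ i, x (τ i) ^ (i : ℕ)) = ∏ i, x i ^ ((τ⁻¹ i : Fin n) : ℕ) := by
      rw [← Equiv.prod_comp τ (fun j => x j ^ ((τ⁻¹ j : Fin n) : ℕ))]
      simp
    rw [hσ, hτ]
    simp only [pow_add, Finset.prod_mul_distrib]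
    ring
  -- Compute the integral of the right-hand side
  have hInt : (∫ x : Fin n → ℝ,
      (∏ i : Fin n, ∏ j ∈ Finset.Ioi i, (x j - x i) ^ 2) * ∏ j : Fin n, w (x j))
      = ∑ σ : Equiv.Perm (Fin n), ∑ τ : Equiv.Perm (Fin n),
          (((Equiv.Perm.sign σ : ℤ) : ℝ) * ((Equiv.Perm.sign τ : ℤ) : ℝ)) *
            ∏ i, μ (((σ⁻¹ i : Fin n) : ℕ) + ((τ⁻¹ i : Fin n) : ℕ)) := by
    have he : ∀ σ τ : Equiv.Perm (Fin n), ∀ i : Fin n,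
        ((σ⁻¹ i : Fin n) : ℕ) + ((τ⁻¹ i : Fin n) : ℕ) ≤ 2 * n - 2 :=
      fun σ τ i => hle _ _
    simp_rw [point]
    rw [integral_finset_sum _ (fun σ _ => integrable_finset_sum _
      (fun τ _ => ((intA _ (he σ τ)).const_mul _)))]
    refine Finset.sum_congr rfl fun σ _ => ?_
    rw [integral_finset_sum _ (fun τ _ => ((intA _ (he σ τ)).const_mul _))]
    refine Finset.sum_congr rfl fun τ _ => ?_
    rw [integral_const_mul, intEq]
  -- The determinant as a sum over permutations
  set S : ℝ := ∑ γ : Equiv.Perm (Fin n),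
      ((Equiv.Perm.sign γ : ℤ) : ℝ) * ∏ i, μ (((γ i : Fin n) : ℕ) + (i : ℕ)) with hS
  have hdet : (Matrix.of fun i j : Fin n => ∫ x : ℝ, x ^ ((i : ℕ) + (j : ℕ)) * w x).det = S := by
    rw [Matrix.det_apply']
    rfl
  -- Combinatorial identity: the double sum equals n! * S
  have hsq : ∀ τ : Equiv.Perm (Fin n),
      ((Equiv.Perm.sign τ : ℤ) : ℝ) * ((Equiv.Perm.sign τ : ℤ) : ℝ) = 1 := by
    intro τ
    rcases Int.units_eq_one_or (Equiv.Perm.sign τ) with h | h <;> simp [h]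
  have hcomb : (∑ σ : Equiv.Perm (Fin n), ∑ τ : Equiv.Perm (Fin n),
      (((Equiv.Perm.sign σ : ℤ) : ℝ) * ((Equiv.Perm.sign τ : ℤ) : ℝ)) *
        ∏ i, μ (((σ⁻¹ i : Fin n) : ℕ) + ((τ⁻¹ i : Fin n) : ℕ)))
      = (n.factorial : ℝ) * S := by
    rw [Finset.sum_comm]
    have key : ∀ τ : Equiv.Perm (Fin n),
        (∑ σ : Equiv.Perm (Fin n),
          (((Equiv.Perm.sign σ : ℤ) : ℝ) * ((Equiv.Perm.sign τ : ℤ) : ℝ)) *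
            ∏ i, μ (((σ⁻¹ i : Fin n) : ℕ) + ((τ⁻¹ i : Fin n) : ℕ))) = S := by
      intro τ
      -- reindex the product over i by τ
      have hp : ∀ σ : Equiv.Perm (Fin n),
          (∏ i, μ (((σ⁻¹ i : Fin n) : ℕ) + ((τ⁻¹ i : Fin n) : ℕ)))
            = ∏ j, μ (((σ⁻¹ (τ j) : Fin n) : ℕ) + (j : ℕ)) := by
        intro σ
        rw [← Equiv.prod_comp τ (fun i => μ (((σ⁻¹ i : Fin n) : ℕ) + ((τ⁻¹ i : Fin n) : ℕ)))]
        simp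
      simp_rw [hp]
      -- reindex σ ↦ τ * γ⁻¹
      set e : Equiv.Perm (Fin n) ≃ Equiv.Perm (Fin n) :=
        (Equiv.inv (Equiv.Perm (Fin n))).trans (Equiv.mulLeft τ) with heq
      rw [← Equiv.sum_comp e (fun σ => (((Equiv.Perm.sign σ : ℤ) : ℝ) *
        ((Equiv.Perm.sign τ : ℤ) : ℝ)) * ∏ j, μ (((σ⁻¹ (τ j) : Fin n) : ℕ) + (j : ℕ)))]
      rw [hS]
      refine Finset.sum_congr rfl fun γ _ => ?_
      have he1 : e γ = τ * γ⁻¹ := by rw [heq]; rfl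
      have he2 : ∀ j : Fin n, (e γ)⁻¹ (τ j) = γ j := by
        intro j
        simp [he1, Equiv.Perm.mul_apply]
      have he3 : ((Equiv.Perm.sign (e γ) : ℤ) : ℝ) =
          ((Equiv.Perm.sign τ : ℤ) : ℝ) * ((Equiv.Perm.sign γ : ℤ) : ℝ) := by
        rw [he1]
        simp
      simp_rw [he2]
      rw [he3]
      calc ((Equiv.Perm.sign τ : ℤ) : ℝ) * ((Equiv.Perm.sign γ : ℤ) : ℝ) *
            ((Equiv.Perm.sign τ : ℤ) : ℝ) * ∏ j, μ (((γ j : Fin n) : ℕ) + (j : ℕ))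
          = (((Equiv.Perm.sign τ : ℤ) : ℝ) * ((Equiv.Perm.sign τ : ℤ) : ℝ)) *
            (((Equiv.Perm.sign γ : ℤ) : ℝ) * ∏ j, μ (((γ j : Fin n) : ℕ) + (j : ℕ))) := by ring
        _ = ((Equiv.Perm.sign γ : ℤ) : ℝ) * ∏ j, μ (((γ j : Fin n) : ℕ) + (j : ℕ)) := by
            rw [hsq τ, one_mul]
    simp_rw [key]
    rw [Finset.sum_const, Finset.card_univ, Fintype.card_perm, Fintype.card_fin, nsmul_eq_mul]
  rw [hdet, hInt, hcomb, one_div, inv_mul_cancel_left₀]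
  exact_mod_cast (Nat.factorial_pos n).ne'
end

section
/- Andréief (generalized Cauchy–Binet) identity: if f_1,…,f_n and g_1,…,g_n are functions on ℝ with f_i·g_j integrable for all i,j, then ∫…∫ det(f_i(x_j))_{i,j=1}^n · det(g_i(x_j))_{i,j=1}^n dx_1…dx_n = n! · det(∫ f_i(x) g_j(x) dx)_{i,j=1}^n. -/
open MeasureTheory

/-- The Andréief (generalized Cauchy–Binet) identity:
`∫…∫ det(f_i(x_j)) det(g_i(x_j)) dx = n! · det(∫ f_i g_j)`. -/
theorem andreief_identity (n : ℕ) (f g : Fin n → ℝ → ℝ)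
    (hf : ∀ i, Measurable (f i)) (hg : ∀ j, Measurable (g j))
    (hfg : ∀ i j, Integrable (fun x : ℝ => f i x * g j x)) :
    (∫ x : Fin n → ℝ,
        (Matrix.of fun i j : Fin n => f i (x j)).det *
          (Matrix.of fun i j : Fin n => g i (x j)).det) =
      (n.factorial : ℝ) * (Matrix.of fun i j : Fin n => ∫ x : ℝ, f i x * g j x).det := by
  classical
  set A : Matrix (Fin n) (Fin n) ℝ := Matrix.of fun i j => ∫ x : ℝ, f i x * g j x with hA
  set c : Equiv.Perm (Fin n) → ℝ := fun σ => ((Equiv.Perm.sign σ : ℤ) : ℝ) with hc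
  have hint : ∀ σ τ : Equiv.Perm (Fin n),
      Integrable (fun x : Fin n → ℝ => ∏ j, (f (σ j) (x j) * g (τ j) (x j))) :=
    fun σ τ => Integrable.fintype_prod (fun j => hfg (σ j) (τ j))
  have expand : ∀ x : Fin n → ℝ,
      (Matrix.of fun i j : Fin n => f i (x j)).det *
        (Matrix.of fun i j : Fin n => g i (x j)).det
      = ∑ σ : Equiv.Perm (Fin n), ∑ τ : Equiv.Perm (Fin n),
          (c σ * c τ) * ∏ j, (f (σ j) (x j) * g (τ j) (x j)) := by
    intro x
    rw [Matrix.det_apply', Matrix.det_apply', Finset.sum_mul_sum]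
    refine Finset.sum_congr rfl fun σ _ => Finset.sum_congr rfl fun τ _ => ?_
    simp only [zsmul_eq_mul, Matrix.of_apply, hc]
    rw [Finset.prod_mul_distrib]
    push_cast
    ring
  have step1 : (∫ x : Fin n → ℝ,
        (Matrix.of fun i j : Fin n => f i (x j)).det *
          (Matrix.of fun i j : Fin n => g i (x j)).det)
      = ∑ σ : Equiv.Perm (Fin n), ∑ τ : Equiv.Perm (Fin n),
          (c σ * c τ) * ∏ j, A (σ j) (τ j) := by
    simp_rw [expand]
    rw [integral_finset_sum _ (fun σ _ => integrable_finset_sum _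
      (fun τ _ => ((hint σ τ).const_mul _)))]
    refine Finset.sum_congr rfl fun σ _ => ?_
    rw [integral_finset_sum _ (fun τ _ => ((hint σ τ).const_mul _))]
    refine Finset.sum_congr rfl fun τ _ => ?_
    rw [MeasureTheory.integral_const_mul,
      MeasureTheory.integral_fintype_prod_volume_eq_prod (ι := Fin n)
        (fun j x => f (σ j) x * g (τ j) x)]
    rfl
  rw [step1]
  have csq : ∀ τ : Equiv.Perm (Fin n), c τ * c τ = 1 := by
    intro τ
    simp only [hc]
    rcases Int.units_eq_one_or (Equiv.Perm.sign τ) with h | h <;> rw [h] <;> norm_num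
  have inner : ∀ τ : Equiv.Perm (Fin n),
      (∑ σ : Equiv.Perm (Fin n), (c σ * c τ) * ∏ j, A (σ j) (τ j)) = A.det := by
    intro τ
    rw [Matrix.det_apply']
    refine (Fintype.sum_equiv (Equiv.mulRight τ) _ _ fun ρ => ?_).symm
    have hsign : c (ρ * τ) = c ρ * c τ := by
      simp only [hc, Equiv.Perm.sign_mul]; push_cast; ring
    have hperm : ∏ j, A ((ρ * τ) j) (τ j) = ∏ i, A (ρ i) i := by
      simp only [Equiv.Perm.mul_apply]
      exact Equiv.prod_comp τ (fun i => A (ρ i) i)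
    simp only [Equiv.coe_mulRight, hperm, hsign, zsmul_eq_mul]
    rw [mul_assoc (c ρ) (c τ) (c τ), csq τ, mul_one]
  rw [Finset.sum_comm, Finset.sum_congr rfl (fun τ _ => inner τ), Finset.sum_const]
  rw [Finset.card_univ, Fintype.card_perm, Fintype.card_fin, nsmul_eq_mul]
end

section
/- Let Y and Z be invertible (p+q)×(p+q) matrices over a field with det Y = det Z = 1. Then det([I_p 0] Z⁻¹ Y [I_p; 0]) = det([0 I_q] Y⁻¹ Z [0; I_q]), i.e., the determinant of the top-left p×p block of Z⁻¹Y equals the determinant of the bottom-right q×q block of Y⁻¹Z. -/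
open Matrix

theorem aux_det_blocks {K : Type*} [Field K] {p q : ℕ}
    (M : Matrix (Fin p ⊕ Fin q) (Fin p ⊕ Fin q) K) (h : M.det = 1) :
    M.toBlocks₁₁.det = (M⁻¹).toBlocks₂₂.det := by
  have hu : IsUnit M.det := h ▸ isUnit_one
  have hMi : M * M⁻¹ = 1 := M.mul_nonsing_inv hu
  have hblocks :
      fromBlocks
        (M.toBlocks₁₁ * (M⁻¹).toBlocks₁₁ + M.toBlocks₁₂ * (M⁻¹).toBlocks₂₁)
        (M.toBlocks₁₁ * (M⁻¹).toBlocks₁₂ + M.toBlocks₁₂ * (M⁻¹).toBlocks₂₂)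
        (M.toBlocks₂₁ * (M⁻¹).toBlocks₁₁ + M.toBlocks₂₂ * (M⁻¹).toBlocks₂₁)
        (M.toBlocks₂₁ * (M⁻¹).toBlocks₁₂ + M.toBlocks₂₂ * (M⁻¹).toBlocks₂₂)
      = fromBlocks 1 0 0 1 := by
    rw [← fromBlocks_multiply, fromBlocks_toBlocks, fromBlocks_toBlocks, hMi, fromBlocks_one]
  rw [fromBlocks_inj] at hblocks
  obtain ⟨-, e12, -, e22⟩ := hblocks
  have key : M * fromBlocks 1 ((M⁻¹).toBlocks₁₂) 0 ((M⁻¹).toBlocks₂₂)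
      = fromBlocks M.toBlocks₁₁ 0 M.toBlocks₂₁ 1 := by
    nth_rewrite 1 [← fromBlocks_toBlocks M]
    rw [fromBlocks_multiply]
    simp [e12, e22]
  have := congrArg Matrix.det key
  rw [det_mul, h, one_mul, det_fromBlocks_zero₂₁, det_fromBlocks_zero₁₂] at this
  simpa using this.symm

/-- For `Y, Z` of determinant one, the determinant of the top-left `p×p` block
of `Z⁻¹ Y` equals the determinant of the bottom-right `q×q` block of `Y⁻¹ Z`. -/
theorem det_topleft_eq_det_bottomright {K : Type*} [Field K] {p q : ℕ}
    (Y Z : Matrix (Fin p ⊕ Fin q) (Fin p ⊕ Fin q) K)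
    (hY : Y.det = 1) (hZ : Z.det = 1) :
    ((Z⁻¹ * Y).toBlocks₁₁).det = ((Y⁻¹ * Z).toBlocks₂₂).det := by
  have hZu : IsUnit Z.det := hZ ▸ isUnit_one
  have hN : Y⁻¹ * Z = (Z⁻¹ * Y)⁻¹ := by
    rw [Matrix.mul_inv_rev, Z.nonsing_inv_nonsing_inv hZu]
  have hdet : (Z⁻¹ * Y).det = 1 := by
    rw [det_mul, Matrix.det_nonsing_inv, hY, hZ, mul_one, Ring.inverse_one]
  rw [hN]
  exact aux_det_blocks _ hdet
end

section
/- Lagrange expansion of a stacked determinant: if F is an n₁×n matrix and G is an n₂×n matrix with n₁+n₂ = n, then det of the n×n matrix obtained by stacking F above G equals the sum over subsets S ⊆ {1,…,n} with |S| = n₁ of sgn(S) · det(F restricted to columns in S) · det(G restricted to columns in the complement of S), where sgn(S) is the sign of the permutation sorting (s_1,…,s_{n₁}, s̄_1,…,s̄_{n₂}). -/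
open Finset

/-- The permutation of `Fin (n₁ + n₂)` sending `(1,…,n₁)` to the elements of `S`
in increasing order and `(n₁+1,…,n₁+n₂)` to the elements of `Sᶜ` in increasing
order. -/
noncomputable def blockSelectPerm (n₁ n₂ : ℕ) (S : Finset (Fin (n₁ + n₂)))
    (hS : S.card = n₁) : Equiv.Perm (Fin (n₁ + n₂)) :=
  finSumFinEquiv.symm.trans
    (((S.orderIsoOfFin hS).toEquiv.sumCongr
        (((Sᶜ.orderIsoOfFin (by simp [Finset.card_compl, hS])).toEquiv).trans
          (Equiv.subtypeEquivRight (fun x => Finset.mem_compl)))).trans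
      (Equiv.sumCompl (· ∈ S)))

lemma blockSelectPerm_inl (n₁ n₂ : ℕ) (S : Finset (Fin (n₁ + n₂))) (hS : S.card = n₁)
    (c : Fin n₁) :
    blockSelectPerm n₁ n₂ S hS (finSumFinEquiv (Sum.inl c)) = S.orderIsoOfFin hS c := by
  simp [blockSelectPerm]

lemma blockSelectPerm_inr (n₁ n₂ : ℕ) (S : Finset (Fin (n₁ + n₂))) (hS : S.card = n₁)
    (d : Fin n₂) :
    blockSelectPerm n₁ n₂ S hS (finSumFinEquiv (Sum.inr d)) =
      (Sᶜ.orderIsoOfFin (by simp [Finset.card_compl, hS]) d : Fin (n₁ + n₂)) := by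
  simp [blockSelectPerm]

noncomputable def blockPair (n₁ n₂ : ℕ)
    (p : {S : Finset (Fin (n₁ + n₂)) // S ∈ Finset.univ.powersetCard n₁} ×
      Equiv.Perm (Fin n₁) × Equiv.Perm (Fin n₂)) : Equiv.Perm (Fin (n₁ + n₂)) :=
  Equiv.permCongr finSumFinEquiv (Equiv.sumCongr p.2.1 p.2.2) *
    (blockSelectPerm n₁ n₂ p.1.1 (Finset.mem_powersetCard.mp p.1.2).2)⁻¹

lemma blockPair_apply (n₁ n₂ : ℕ)
    (p : {S : Finset (Fin (n₁ + n₂)) // S ∈ Finset.univ.powersetCard n₁} ×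
      Equiv.Perm (Fin n₁) × Equiv.Perm (Fin n₂)) (x : Fin n₁ ⊕ Fin n₂) :
    blockPair n₁ n₂ p
        (blockSelectPerm n₁ n₂ p.1.1 (Finset.mem_powersetCard.mp p.1.2).2
          (finSumFinEquiv x)) =
      finSumFinEquiv (Sum.map p.2.1 p.2.2 x) := by
  simp [blockPair, Equiv.Perm.mul_apply]

lemma blockPair_term {R : Type*} [CommRing R] (n₁ n₂ : ℕ)
    (F : Matrix (Fin n₁) (Fin (n₁ + n₂)) R) (G : Matrix (Fin n₂) (Fin (n₁ + n₂)) R)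
    (p : {S : Finset (Fin (n₁ + n₂)) // S ∈ Finset.univ.powersetCard n₁} ×
      Equiv.Perm (Fin n₁) × Equiv.Perm (Fin n₂)) :
    ((Equiv.Perm.sign
        (blockSelectPerm n₁ n₂ p.1.1 (Finset.mem_powersetCard.mp p.1.2).2) : ℤ) : R) *
      ((((Equiv.Perm.sign p.2.1 : ℤ) : R) *
          ∏ c, F (p.2.1 c) (p.1.1.orderIsoOfFin (Finset.mem_powersetCard.mp p.1.2).2 c)) *
        (((Equiv.Perm.sign p.2.2 : ℤ) : R) *
          ∏ d, G (p.2.2 d) ((p.1.1ᶜ).orderIsoOfFin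
            (by simp [Finset.card_compl, (Finset.mem_powersetCard.mp p.1.2).2]) d))) =
    ((Equiv.Perm.sign (blockPair n₁ n₂ p) : ℤ) : R) *
      ∏ j, ((Matrix.fromRows F G).submatrix finSumFinEquiv.symm id)
        (blockPair n₁ n₂ p j) j := by
  obtain ⟨⟨S, hSmem⟩, τ, ρ⟩ := p
  have hS := (Finset.mem_powersetCard.mp hSmem).2
  have hsign : Equiv.Perm.sign (blockPair n₁ n₂ (⟨S, hSmem⟩, τ, ρ)) =
      Equiv.Perm.sign τ * Equiv.Perm.sign ρ *
        Equiv.Perm.sign (blockSelectPerm n₁ n₂ S hS) := by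
    unfold blockPair
    simp [Equiv.Perm.sign_permCongr, Equiv.Perm.sign_sumCongr]
  have hprod : (∏ j, ((Matrix.fromRows F G).submatrix finSumFinEquiv.symm id)
        (blockPair n₁ n₂ (⟨S, hSmem⟩, τ, ρ) j) j) =
      (∏ c, F (τ c) (S.orderIsoOfFin hS c)) *
        ∏ d, G (ρ d) ((Sᶜ).orderIsoOfFin (by simp [Finset.card_compl, hS]) d) := by
    have e1 := Fintype.prod_equiv (finSumFinEquiv.trans (blockSelectPerm n₁ n₂ S hS))
      (fun x => ((Matrix.fromRows F G).submatrix finSumFinEquiv.symm id)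
        (blockPair n₁ n₂ (⟨S, hSmem⟩, τ, ρ)
          ((finSumFinEquiv.trans (blockSelectPerm n₁ n₂ S hS)) x))
        ((finSumFinEquiv.trans (blockSelectPerm n₁ n₂ S hS)) x))
      (fun j => ((Matrix.fromRows F G).submatrix finSumFinEquiv.symm id)
        (blockPair n₁ n₂ (⟨S, hSmem⟩, τ, ρ) j) j)
      (fun x => rfl)
    rw [← e1, Fintype.prod_sum_type]
    congr 1
    · refine Finset.prod_congr rfl fun c _ => ?_
      have h1 : blockPair n₁ n₂ (⟨S, hSmem⟩, τ, ρ)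
          (blockSelectPerm n₁ n₂ S hS (finSumFinEquiv (Sum.inl c))) =
            finSumFinEquiv (Sum.inl (τ c)) := by
        simpa using blockPair_apply n₁ n₂ (⟨S, hSmem⟩, τ, ρ) (Sum.inl c)
      simp only [Equiv.trans_apply]
      rw [h1, blockSelectPerm_inl]
      simp
    · refine Finset.prod_congr rfl fun d _ => ?_
      have h1 : blockPair n₁ n₂ (⟨S, hSmem⟩, τ, ρ)
          (blockSelectPerm n₁ n₂ S hS (finSumFinEquiv (Sum.inr d))) =
            finSumFinEquiv (Sum.inr (ρ d)) := by
        simpa using blockPair_apply n₁ n₂ (⟨S, hSmem⟩, τ, ρ) (Sum.inr d)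
      simp only [Equiv.trans_apply]
      rw [h1, blockSelectPerm_inr]
      simp
  rw [hprod, hsign]
  push_cast
  ring

lemma blockPair_mem_iff (n₁ n₂ : ℕ)
    (p : {S : Finset (Fin (n₁ + n₂)) // S ∈ Finset.univ.powersetCard n₁} ×
      Equiv.Perm (Fin n₁) × Equiv.Perm (Fin n₂)) (j : Fin (n₁ + n₂)) :
    j ∈ p.1.1 ↔ ((blockPair n₁ n₂ p j : Fin (n₁ + n₂)) : ℕ) < n₁ := by
  obtain ⟨⟨S, hSmem⟩, τ, ρ⟩ := p
  set hS := (Finset.mem_powersetCard.mp hSmem).2 with hhS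
  rcases hy : finSumFinEquiv.symm ((blockSelectPerm n₁ n₂ S hS)⁻¹ j) with c | d
  · have hj : j = blockSelectPerm n₁ n₂ S hS (finSumFinEquiv (Sum.inl c)) := by
      rw [← hy]; simp
    have h2 : blockPair n₁ n₂ (⟨S, hSmem⟩, τ, ρ) j = finSumFinEquiv (Sum.inl (τ c)) := by
      rw [Equiv.Perm.inv_def] at hy; simp [blockPair, Equiv.Perm.mul_apply, hy]
    refine iff_of_true ?_ ?_
    · rw [hj, blockSelectPerm_inl]; exact Finset.coe_mem _
    · rw [h2]; simpa using (τ c).is_lt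
  · have hj : j = blockSelectPerm n₁ n₂ S hS (finSumFinEquiv (Sum.inr d)) := by
      rw [← hy]; simp
    have h2 : blockPair n₁ n₂ (⟨S, hSmem⟩, τ, ρ) j = finSumFinEquiv (Sum.inr (ρ d)) := by
      rw [Equiv.Perm.inv_def] at hy; simp [blockPair, Equiv.Perm.mul_apply, hy]
    refine iff_of_false ?_ ?_
    · rw [hj, blockSelectPerm_inr]
      exact fun h => (Finset.mem_compl.mp (Finset.coe_mem _)) h
    · rw [h2]; simp

lemma blockPair_bijective (n₁ n₂ : ℕ) : Function.Bijective (blockPair n₁ n₂) := by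
  rw [Fintype.bijective_iff_injective_and_card]
  constructor
  · intro p q hpq
    obtain ⟨⟨S, hSmem⟩, τ, ρ⟩ := p
    obtain ⟨⟨S', hSmem'⟩, τ', ρ'⟩ := q
    have hSS : S = S' := by
      ext j
      have h1 := blockPair_mem_iff n₁ n₂ (⟨S, hSmem⟩, τ, ρ) j
      have h2 := blockPair_mem_iff n₁ n₂ (⟨S', hSmem'⟩, τ', ρ') j
      rw [hpq] at h1
      exact h1.trans h2.symm
    subst hSS
    have hK : Equiv.permCongr finSumFinEquiv (Equiv.sumCongr τ ρ) =
        Equiv.permCongr finSumFinEquiv (Equiv.sumCongr τ' ρ') :=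
      mul_right_cancel hpq
    have hsum : Equiv.sumCongr τ ρ = Equiv.sumCongr τ' ρ' := by
      have := congrArg (fun K => Equiv.permCongr finSumFinEquiv.symm K) hK
      simpa [Equiv.permCongr_trans, ← Equiv.permCongr_trans] using this
    have hτ : τ = τ' := by
      ext c
      have := congrArg (fun K => K (Sum.inl c)) hsum
      exact congrArg Fin.val (by simpa using this)
    have hρ : ρ = ρ' := by
      ext d
      have := congrArg (fun K => K (Sum.inr d)) hsum
      exact congrArg Fin.val (by simpa using this)
    simp [hτ, hρ]
  · simp only [Fintype.card_prod, Fintype.card_coe, Finset.card_powersetCard,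
      Fintype.card_perm, Fintype.card_fin]
    rw [← Nat.choose_mul_factorial_mul_factorial (Nat.le_add_right n₁ n₂)]
    simp [mul_assoc]


/-- Lagrange (Laplace) expansion of a stacked determinant: the determinant of the
matrix obtained by stacking `F` above `G` is the sum over the `n₁`-element subsets
`S` of the columns of `sgn(S) · det(F on columns S) · det(G on columns Sᶜ)`. -/
theorem lagrange_block_expansion {R : Type*} [CommRing R] (n₁ n₂ : ℕ)
    (F : Matrix (Fin n₁) (Fin (n₁ + n₂)) R) (G : Matrix (Fin n₂) (Fin (n₁ + n₂)) R) :
    ((Matrix.fromRows F G).submatrix finSumFinEquiv.symm id).det =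
      ∑ S ∈ (Finset.univ.powersetCard n₁ : Finset (Finset (Fin (n₁ + n₂)))).attach,
        ((Equiv.Perm.sign
            (blockSelectPerm n₁ n₂ S.1 (Finset.mem_powersetCard.mp S.2).2) : ℤ) : R) *
          (Matrix.of fun i j : Fin n₁ =>
              F i (S.1.orderIsoOfFin (Finset.mem_powersetCard.mp S.2).2 j)).det *
          (Matrix.of fun i j : Fin n₂ =>
              G i ((S.1ᶜ).orderIsoOfFin
                (by simp [Finset.card_compl, (Finset.mem_powersetCard.mp S.2).2]) j)).det := by
  
  classical
  rw [Matrix.det_apply', ← Finset.univ_eq_attach]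
  have step1 : (∑ σ : Equiv.Perm (Fin (n₁ + n₂)), ((Equiv.Perm.sign σ : ℤ) : R) *
      ∏ j, ((Matrix.fromRows F G).submatrix finSumFinEquiv.symm id) (σ j) j) =
      ∑ p : {S : Finset (Fin (n₁ + n₂)) // S ∈ Finset.univ.powersetCard n₁} ×
          Equiv.Perm (Fin n₁) × Equiv.Perm (Fin n₂),
        ((Equiv.Perm.sign (blockPair n₁ n₂ p) : ℤ) : R) *
          ∏ j, ((Matrix.fromRows F G).submatrix finSumFinEquiv.symm id)
            (blockPair n₁ n₂ p j) j :=
    (Fintype.sum_bijective (blockPair n₁ n₂) (blockPair_bijective n₁ n₂) _ _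
      (fun p => rfl)).symm
  rw [step1, Fintype.sum_prod_type]
  refine Finset.sum_congr rfl fun S _ => ?_
  rw [Fintype.sum_prod_type]
  rw [Matrix.det_apply', Matrix.det_apply']
  simp only [Matrix.of_apply]
  rw [mul_assoc, Finset.sum_mul_sum]
  simp only [Finset.mul_sum]
  refine Finset.sum_congr rfl fun τ _ => Finset.sum_congr rfl fun ρ _ => ?_
  exact (blockPair_term n₁ n₂ F G (S, τ, ρ)).symm
end
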